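/- Let A ∈ ℝ^{n×n}, and let Ū ∈ ℝ^{n×r} have orthonormal columns spanning an A-invariant subspace with A_Ū := Ū⊤AŪ invertible. Then the matrix W := ((Ū⊤A⊤Ū Ū⊤AŪ)^{-1/2})(Ū⊤A⊤Ū) = (A_Ū⊤A_Ū)^{-1/2} A_Ū⊤ is an orthogonal r×r matrix, and the modified iteration Û' = AÛ(Û⊤A⊤AÛ)^{-1/2}(Û⊤A⊤Û Û⊤AÛ)^{-1/2} Û⊤A⊤Û satisfies Û' = Ū when Û = Ū; i.e., Ū is a stationary point of the modified natural power method. -/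

import Mathlib

open Matrix

open Classical in
noncomputable def invSqrt {r : ℕ} (M : Matrix (Fin r) (Fin r) ℝ) :
    Matrix (Fin r) (Fin r) ℝ :=
  if h : M.PosSemidef then
    ((h.1.eigenvectorUnitary : Matrix (Fin r) (Fin r) ℝ) *
      diagonal (Real.sqrt ∘ h.1.eigenvalues) *
      (star h.1.eigenvectorUnitary : Matrix (Fin r) (Fin r) ℝ))⁻¹ else 0

noncomputable def psdSqrt {r : ℕ} {M : Matrix (Fin r) (Fin r) ℝ} (h : M.PosSemidef) :
    Matrix (Fin r) (Fin r) ℝ :=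
  (h.1.eigenvectorUnitary : Matrix (Fin r) (Fin r) ℝ) *
    diagonal (Real.sqrt ∘ h.1.eigenvalues) *
    (star h.1.eigenvectorUnitary : Matrix (Fin r) (Fin r) ℝ)

lemma psdSqrt_mul_self {r : ℕ} {M : Matrix (Fin r) (Fin r) ℝ} (h : M.PosSemidef) :
    psdSqrt h * psdSqrt h = M := by
  have hV : (star h.1.eigenvectorUnitary : Matrix (Fin r) (Fin r) ℝ) *
      (h.1.eigenvectorUnitary : Matrix (Fin r) (Fin r) ℝ) = 1 :=
    Unitary.coe_star_mul_self _
  have hD : diagonal (Real.sqrt ∘ h.1.eigenvalues) * diagonal (Real.sqrt ∘ h.1.eigenvalues)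
      = diagonal (RCLike.ofReal ∘ h.1.eigenvalues) := by
    rw [diagonal_mul_diagonal]
    congr 1
    funext i
    simp [Real.mul_self_sqrt (h.eigenvalues_nonneg i)]
  have hM := h.1.spectral_theorem
  rw [Unitary.conjStarAlgAut_apply] at hM
  conv_rhs => rw [hM]
  unfold psdSqrt
  calc _ = (h.1.eigenvectorUnitary : Matrix (Fin r) (Fin r) ℝ) *
        (diagonal (Real.sqrt ∘ h.1.eigenvalues) *
        ((star h.1.eigenvectorUnitary : Matrix (Fin r) (Fin r) ℝ) *
        (h.1.eigenvectorUnitary : Matrix (Fin r) (Fin r) ℝ)) *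
        diagonal (Real.sqrt ∘ h.1.eigenvalues)) *
        (star h.1.eigenvectorUnitary : Matrix (Fin r) (Fin r) ℝ) := by
          simp only [Matrix.mul_assoc]
    _ = _ := by rw [hV, Matrix.mul_one, hD]

lemma psdSqrt_transpose {r : ℕ} {M : Matrix (Fin r) (Fin r) ℝ} (h : M.PosSemidef) :
    (psdSqrt h)ᵀ = psdSqrt h := by
  have : star (psdSqrt h) = psdSqrt h := by
    unfold psdSqrt
    rw [star_mul, star_mul, star_star, Matrix.mul_assoc]
    congr 2
    ext i j
    by_cases hij : i = j <;> simp [diagonal, hij, eq_comm]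
  rw [Matrix.star_eq_conjTranspose, Matrix.conjTranspose_eq_transpose_of_trivial] at this
  exact this

lemma invSqrt_eq {r : ℕ} {M : Matrix (Fin r) (Fin r) ℝ} (h : M.PosSemidef) :
    invSqrt M = (psdSqrt h)⁻¹ := by
  simp [invSqrt, h, psdSqrt]

lemma aux_ortho {r : ℕ} (B : Matrix (Fin r) (Fin r) ℝ) (hB : IsUnit B.det) :
    invSqrt (Bᵀ * B) * Bᵀ * (invSqrt (Bᵀ * B) * Bᵀ)ᵀ = 1 ∧
    B * invSqrt (Bᵀ * B) * (invSqrt (Bᵀ * B) * Bᵀ) = 1 := by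
  have hpsd : (Bᵀ * B).PosSemidef := by
    simpa using Matrix.posSemidef_conjTranspose_mul_self B
  rw [invSqrt_eq hpsd]
  set S : Matrix (Fin r) (Fin r) ℝ := psdSqrt hpsd with hS
  have hSsq : S * S = Bᵀ * B := psdSqrt_mul_self hpsd
  have hSsymm : Sᵀ = S := psdSqrt_transpose hpsd
  have hdetBt : IsUnit Bᵀ.det := by rwa [Matrix.det_transpose]
  have hdetS : IsUnit S.det := by
    have h1 : IsUnit (Bᵀ * B).det := by
      rw [Matrix.det_mul]; exact hdetBt.mul hB
    have h2 : S.det * S.det = (Bᵀ * B).det := by rw [← Matrix.det_mul, hSsq]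
    rw [← h2] at h1
    exact isUnit_of_mul_isUnit_left h1
  have hSinv : S⁻¹ * S = 1 := Matrix.nonsing_inv_mul _ hdetS
  have hSinv' : S * S⁻¹ = 1 := Matrix.mul_nonsing_inv _ hdetS
  have hSinvsymm : (S⁻¹)ᵀ = S⁻¹ := by rw [Matrix.transpose_nonsing_inv, hSsymm]
  have hSS : S⁻¹ * S⁻¹ = (Bᵀ * B)⁻¹ := by rw [← Matrix.mul_inv_rev, hSsq]
  have hBinv : B * (Bᵀ * B)⁻¹ * Bᵀ = 1 := by
    calc B * (Bᵀ * B)⁻¹ * Bᵀ = B * B⁻¹ * (Bᵀ⁻¹ * Bᵀ) := by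
          rw [Matrix.mul_inv_rev]; simp only [Matrix.mul_assoc]
      _ = 1 := by
          rw [Matrix.mul_nonsing_inv _ hB, Matrix.nonsing_inv_mul _ hdetBt, Matrix.one_mul]
  constructor
  · calc S⁻¹ * Bᵀ * (S⁻¹ * Bᵀ)ᵀ
        = S⁻¹ * Bᵀ * (Bᵀᵀ * (S⁻¹)ᵀ) := by rw [Matrix.transpose_mul]
      _ = S⁻¹ * (Bᵀ * B) * S⁻¹ := by
          rw [Matrix.transpose_transpose, hSinvsymm]; simp only [Matrix.mul_assoc]
      _ = S⁻¹ * (S * S) * S⁻¹ := by rw [hSsq]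
      _ = (S⁻¹ * S) * (S * S⁻¹) := by simp only [Matrix.mul_assoc]
      _ = 1 := by rw [hSinv, hSinv', Matrix.one_mul]
  · calc B * S⁻¹ * (S⁻¹ * Bᵀ) = B * (S⁻¹ * S⁻¹) * Bᵀ := by simp only [Matrix.mul_assoc]
      _ = 1 := by rw [hSS, hBinv]

/-- The extra factor `W = (A_Ūᵀ A_Ū)^{-1/2} A_Ūᵀ` is orthogonal, and `Ū` is a
stationary point of the modified natural power method. -/
theorem stmt_7 {n r : ℕ} (A : Matrix (Fin n) (Fin n) ℝ)
    (U : Matrix (Fin n) (Fin r) ℝ) (hUorth : Uᵀ * U = 1)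
    (hinv : (1 - U * Uᵀ) * A * U = 0)
    (hAU : IsUnit (Uᵀ * A * U).det) :
    (invSqrt ((Uᵀ * A * U)ᵀ * (Uᵀ * A * U)) * (Uᵀ * A * U)ᵀ) *
      (invSqrt ((Uᵀ * A * U)ᵀ * (Uᵀ * A * U)) * (Uᵀ * A * U)ᵀ)ᵀ = 1 ∧
    A * U * invSqrt (Uᵀ * Aᵀ * A * U) *
      (invSqrt (Uᵀ * Aᵀ * U * (Uᵀ * A * U)) * (Uᵀ * Aᵀ * U)) = U := by
  obtain ⟨h1, h2⟩ := aux_ortho (Uᵀ * A * U) hAU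
  have hAUeq : A * U = U * (Uᵀ * A * U) := by
    have h0 : (A - U * (Uᵀ * A)) * U = 0 := by
      simpa [Matrix.sub_mul, Matrix.mul_assoc] using hinv
    rw [Matrix.sub_mul] at h0
    calc A * U = U * (Uᵀ * A) * U := sub_eq_zero.mp h0
      _ = U * (Uᵀ * A * U) := by simp only [Matrix.mul_assoc]
  have hUAU : Uᵀ * Aᵀ * U = (Uᵀ * A * U)ᵀ := by
    rw [Matrix.transpose_mul, Matrix.transpose_mul, Matrix.transpose_transpose,
      Matrix.mul_assoc]
  have hUAAU : Uᵀ * Aᵀ * A * U = (Uᵀ * A * U)ᵀ * (Uᵀ * A * U) := by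
    have ht : Uᵀ * Aᵀ = (Uᵀ * A * U)ᵀ * Uᵀ := by
      have := congrArg Matrix.transpose hAUeq
      rwa [Matrix.transpose_mul, Matrix.transpose_mul] at this
    calc Uᵀ * Aᵀ * A * U = (Uᵀ * Aᵀ) * (A * U) := by rw [Matrix.mul_assoc]
      _ = (Uᵀ * A * U)ᵀ * Uᵀ * (U * (Uᵀ * A * U)) := by rw [ht, hAUeq]
      _ = (Uᵀ * A * U)ᵀ * (Uᵀ * U) * (Uᵀ * A * U) := by simp only [Matrix.mul_assoc]
      _ = (Uᵀ * A * U)ᵀ * (Uᵀ * A * U) := by rw [hUorth, Matrix.mul_one]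
  refine ⟨h1, ?_⟩
  rw [hUAAU, hUAU, hAUeq]
  have hassoc : U * (Uᵀ * A * U) * invSqrt ((Uᵀ * A * U)ᵀ * (Uᵀ * A * U)) *
      (invSqrt ((Uᵀ * A * U)ᵀ * (Uᵀ * A * U)) * (Uᵀ * A * U)ᵀ) =
      U * ((Uᵀ * A * U) * invSqrt ((Uᵀ * A * U)ᵀ * (Uᵀ * A * U)) *
      (invSqrt ((Uᵀ * A * U)ᵀ * (Uᵀ * A * U)) * (Uᵀ * A * U)ᵀ)) := by
    simp only [Matrix.mul_assoc]
  rw [hassoc, h2, Matrix.mul_one]
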